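/- For equidistant spacing x_i = (i−1)L/(N−1), the quantum Fisher information of the Dicke state |D_N^k⟩ for gradient estimation equals (γt)²(L/(N−1))²·(N+1)k(N−k)/3; this is maximized over k at k = N/2 (N even) giving (γt)²(L/(N−1))²·N²(N+1)/12, and for k = 1 (W state) gives (γt)²(L/(N−1))²·(N²−1)/3. -/
import Mathlib


open Finset

lemma sum_range_id_real (n : ℕ) :
    ∑ i ∈ Finset.range n, (i : ℝ) = n * (n - 1) / 2 := by
  induction n with
  | zero => simp
  | succ m ih => rw [Finset.sum_range_succ, ih]; push_cast; ring

lemma sum_range_sq_real (n : ℕ) :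
    ∑ i ∈ Finset.range n, (i : ℝ) ^ 2 = n * (n - 1) * (2 * n - 1) / 6 := by
  induction n with
  | zero => simp
  | succ m ih => rw [Finset.sum_range_succ, ih]; push_cast; ring

/-- for equidistant spacing `x_i = (i−1)L/(N−1)`, the quantum Fisher
information of the Dicke state `|D_N^k⟩` for gradient estimation (given by `(γt)²` times
the Dicke-state variance formula) equals `(γt)²(L/(N−1))²·(N+1)k(N−k)/3`; this is
maximized over `k` at `k = N/2` (for even `N`), giving `(γt)²(L/(N−1))²·N²(N+1)/12`, and
for `k = 1` (the W state) gives `(γt)²(L/(N−1))²·(N²−1)/3`. -/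
theorem stmt_15 (N k : ℕ) (hN : 2 ≤ N) (hk : k ≤ N) (γ t L : ℝ) :
    let x : ℕ → ℝ := fun i => (i : ℝ) * L / ((N : ℝ) - 1)
    ((γ * t) ^ 2 * ((∑ i ∈ Finset.range N, x i ^ 2)
        - (∑ i ∈ Finset.range N, x i) ^ 2 * (2 * (k : ℝ) - N) ^ 2 / (N : ℝ) ^ 2
        + (∑ i ∈ Finset.range N, ∑ j ∈ (Finset.range N).erase i, x i * x j)
            * ((2 * (k : ℝ) - N) ^ 2 - N) / ((N : ℝ) * ((N : ℝ) - 1)))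
      = (γ * t) ^ 2 * (L / ((N : ℝ) - 1)) ^ 2
          * (((N : ℝ) + 1) * (k : ℝ) * ((N : ℝ) - k)) / 3) ∧
    (Even N → ∀ k' : ℕ, k' ≤ N →
        (γ * t) ^ 2 * (L / ((N : ℝ) - 1)) ^ 2
            * (((N : ℝ) + 1) * (k' : ℝ) * ((N : ℝ) - k')) / 3
          ≤ (γ * t) ^ 2 * (L / ((N : ℝ) - 1)) ^ 2
              * ((N : ℝ) ^ 2 * ((N : ℝ) + 1)) / 12) ∧
    ((γ * t) ^ 2 * (L / ((N : ℝ) - 1)) ^ 2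
          * (((N : ℝ) + 1) * (1 : ℝ) * ((N : ℝ) - 1)) / 3
      = (γ * t) ^ 2 * (L / ((N : ℝ) - 1)) ^ 2 * ((N : ℝ) ^ 2 - 1) / 3) := by
  intro x
  have hNR : (2 : ℝ) ≤ (N : ℝ) := by exact_mod_cast hN
  have hN1 : (N : ℝ) - 1 ≠ 0 := by linarith
  have hN0 : (N : ℝ) ≠ 0 := by linarith
  have hx : ∀ i, x i = (i : ℝ) * L / ((N : ℝ) - 1) := fun i => rfl
  have hS : ∑ i ∈ Finset.range N, x i = (N : ℝ) * ((N : ℝ) - 1) / 2 * L / ((N : ℝ) - 1) := by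
    simp only [hx]
    rw [← Finset.sum_div, ← Finset.sum_mul, sum_range_id_real]
  have hS2 : ∑ i ∈ Finset.range N, x i ^ 2
      = (N : ℝ) * ((N : ℝ) - 1) * (2 * (N : ℝ) - 1) / 6 * L ^ 2 / ((N : ℝ) - 1) ^ 2 := by
    simp only [hx, div_pow, mul_pow]
    rw [← Finset.sum_div, ← Finset.sum_mul, sum_range_sq_real]
  have hD : ∑ i ∈ Finset.range N, ∑ j ∈ (Finset.range N).erase i, x i * x j
      = (∑ i ∈ Finset.range N, x i) ^ 2 - ∑ i ∈ Finset.range N, x i ^ 2 := by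
    have : ∀ i ∈ Finset.range N,
        ∑ j ∈ (Finset.range N).erase i, x i * x j
          = x i * (∑ j ∈ Finset.range N, x j) - x i ^ 2 := by
      intro i hi
      rw [← Finset.mul_sum, Finset.sum_erase_eq_sub hi]
      ring
    rw [Finset.sum_congr rfl this, Finset.sum_sub_distrib, ← Finset.sum_mul, sq]
  refine ⟨?_, ?_, ?_⟩
  · rw [hD, hS, hS2]
    field_simp
    ring
  · intro _ k' hk'
    have hP : 0 ≤ (γ * t) ^ 2 * (L / ((N : ℝ) - 1)) ^ 2 :=
      mul_nonneg (sq_nonneg _) (sq_nonneg _)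
    have h1 : (0 : ℝ) ≤ (N : ℝ) + 1 := by linarith
    nlinarith [mul_nonneg (mul_nonneg hP h1) (sq_nonneg ((N : ℝ) - 2 * k'))]
  · ring
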